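/- arXiv:1903.02368 — 3 statements merged into one kernel-verified Lean document; each statement's English description precedes it below -/
import Mathlib

section
/- If the group Γ of label-preserving automorphisms of a connected, locally finite, deterministically labelled graph X acts quasi-transitively (with finitely many vertex orbits) on X, then Γ is finitely generated. -/
/-- Adjacency of the labelled graph given by `lab : V → V → Option A`. -/
def LabAdj {V A : Type*} (lab : V → V → Option A) (x y : V) : Prop :=
  (lab x y).isSome ∨ (lab y x).isSome

/-- Deterministic labelling. -/
def Deterministic {V A : Type*} (lab : V → V → Option A) : Prop :=
  (∀ x y z : V, (lab x y).isSome → lab x y = lab x z → y = z) ∧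
  (∀ x y z : V, (lab y x).isSome → lab y x = lab z x → y = z)

/-- The group of label-preserving automorphisms, as a subgroup of `Equiv.Perm V`. -/
def labelAut {V A : Type*} (lab : V → V → Option A) : Subgroup (Equiv.Perm V) where
  carrier := {γ | ∀ x y : V, lab (γ x) (γ y) = lab x y}
  one_mem' := by intro x y; simp
  mul_mem' := by
    intro a b ha hb x y
    simpa [Equiv.Perm.mul_apply] using (ha (b x) (b y)).trans (hb x y)
  inv_mem' := by
    intro a ha x y
    simpa using (ha (a⁻¹ x) (a⁻¹ y)).symm

/-!
Determinism makes the action free: an automorphism fixing one vertex fixes its neighbours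
(each is the unique endpoint of its label), hence, by connectedness, every vertex.
Let `R` be a finite set meeting every orbit and `S` the set of automorphisms carrying a
point of `R` into `R` or next to `R`. Freeness and local finiteness make `S` finite, and
walking along a path from a base point `x₀ ∈ R` to `g • x₀`, translating each step back next
to `R`, writes `g` as a product of elements of `S`.
-/

namespace MulAction

variable {G X : Type*} [Group G] [MulAction G X]

def nearElements (r : X → X → Prop) (R : Set X) : Set G :=
  {g | ∃ x ∈ R, ∃ y ∈ R, g • x = y ∨ r y (g • x)}

theorem finite_nearElements {r : X → X → Prop} {R : Set X} (hR : R.Finite)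
    (hlf : ∀ x, {y | r x y}.Finite) (hfree : ∀ (g : G) (x : X), g • x = x → g = 1) :
    (nearElements r R : Set G).Finite := by
  have hinj : ∀ x : X, Function.Injective fun g : G => g • x :=
    fun x g h (hgh : g • x = h • x) => by
      have := hfree (h⁻¹ * g) x (by rw [mul_smul, hgh, inv_smul_smul])
      rwa [inv_mul_eq_one, eq_comm] at this
  have hnear : (R ∪ ⋃ y ∈ R, {z | r y z}).Finite := hR.union (hR.biUnion fun y _ => hlf y)
  refine (hR.biUnion fun x _ => hnear.preimage (hinj x).injOn).subset ?_
  rintro g ⟨x, hx, y, hy, hxy | hxy⟩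
  · exact Set.mem_biUnion hx (Or.inl (show g • x ∈ R by rwa [hxy]))
  · exact Set.mem_biUnion hx (Or.inr (Set.mem_biUnion hy hxy))

theorem closure_nearElements_eq_top {r : X → X → Prop} {R : Set X}
    (hr : ∀ (g : G) x y, r x y → r (g • x) (g • y)) (hR : ∀ x, ∃ g : G, g • x ∈ R)
    {x₀ : X} (hx₀ : x₀ ∈ R) (hconn : ∀ y, Relation.ReflTransGen r x₀ y) :
    Subgroup.closure (nearElements r R : Set G) = ⊤ := by
  have key : ∀ y, Relation.ReflTransGen r x₀ y →
      ∀ h : G, h⁻¹ • y ∈ R → h ∈ Subgroup.closure (nearElements r R) := by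
    intro y hy
    induction hy with
    | refl =>
      exact fun h hh => Subgroup.subset_closure ⟨_, hh, x₀, hx₀, Or.inl (smul_inv_smul h x₀)⟩
    | @tail b c _ hbc ih =>
      intro h hh
      -- `k` brings `b` back into `R`, so `k * h` carries `h⁻¹ • c ∈ R` next to `k • b ∈ R`.
      obtain ⟨k, hk⟩ := hR b
      have hk_inv : k⁻¹ ∈ Subgroup.closure (nearElements r R) := ih k⁻¹ (by rwa [inv_inv])
      have hkh : k * h ∈ nearElements r R :=
        ⟨_, hh, k • b, hk, Or.inr (by rw [mul_smul, smul_inv_smul]; exact hr k b c hbc)⟩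
      simpa only [inv_mul_cancel_left] using mul_mem hk_inv (Subgroup.subset_closure hkh)
  refine eq_top_iff.2 fun g _ => key (g • x₀) (hconn _) g ?_
  rwa [inv_smul_smul]

end MulAction

theorem LabAdj.apply_of_mem_labelAut {V A : Type*} {lab : V → V → Option A} {γ : Equiv.Perm V}
    (hγ : γ ∈ labelAut lab) {x y : V} (h : LabAdj lab x y) : LabAdj lab (γ x) (γ y) := by
  rcases h with h | h
  · exact Or.inl (by rwa [hγ x y])
  · exact Or.inr (by rwa [hγ y x])

namespace Deterministic

variable {V A : Type*} {lab : V → V → Option A}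

theorem apply_eq_of_reflTransGen (hdet : Deterministic lab) {γ : Equiv.Perm V}
    (hγ : γ ∈ labelAut lab) {x y : V} (hxy : Relation.ReflTransGen (LabAdj lab) x y)
    (hx : γ x = x) : γ y = y := by
  induction hxy with
  | refl => exact hx
  | @tail b c _ hbc ih =>
    rcases hbc with h | h
    · exact (hdet.1 b c (γ c) h (by rw [← hγ b c, ih])).symm
    · exact (hdet.2 b c (γ c) h (by rw [← hγ c b, ih])).symm

theorem eq_one_of_apply_eq (hdet : Deterministic lab)
    (hconn : ∀ x y : V, Relation.ReflTransGen (LabAdj lab) x y) {γ : Equiv.Perm V}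
    (hγ : γ ∈ labelAut lab) {x : V} (hx : γ x = x) : γ = 1 :=
  Equiv.ext fun y => hdet.apply_eq_of_reflTransGen hγ (hconn x y) hx

end Deterministic

theorem labelAut_fg_of_quasiTransitive_general
    {V A : Type*} (lab : V → V → Option A)
    (hdet : Deterministic lab)
    (hconn : ∀ x y : V, Relation.ReflTransGen (LabAdj lab) x y)
    (hlf : ∀ x : V, {y : V | LabAdj lab x y}.Finite)
    (hqt : ∃ R : Finset V, ∀ x : V, ∃ γ ∈ labelAut lab, γ x ∈ R) :
    Group.FG (labelAut lab) := by
  obtain ⟨R, hR⟩ := hqt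
  rcases isEmpty_or_nonempty V with _ | ⟨⟨v⟩⟩
  · exact Group.fg_of_finite
  obtain ⟨γ, -, hγv⟩ := hR v
  have hfree : ∀ (g : labelAut lab) (x : V), g • x = x → g = 1 := fun g _ hx =>
    Subtype.ext (hdet.eq_one_of_apply_eq hconn g.2 hx)
  have hadj : ∀ (g : labelAut lab) x y, LabAdj lab x y → LabAdj lab (g • x) (g • y) :=
    fun g _ _ => LabAdj.apply_of_mem_labelAut g.2
  have hcover : ∀ x, ∃ g : labelAut lab, g • x ∈ (R : Set V) := fun x =>
    let ⟨γ, hγ, hγx⟩ := hR x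
    ⟨⟨γ, hγ⟩, hγx⟩
  exact Group.fg_iff.2 ⟨_, MulAction.closure_nearElements_eq_top hadj hcover hγv (hconn _),
    MulAction.finite_nearElements R.finite_toSet hlf hfree⟩

/-- If the group of label-preserving automorphisms of a connected,
locally finite, deterministically labelled graph (with finite label alphabet)
acts quasi-transitively, then it is finitely generated. -/
theorem labelAut_fg_of_quasiTransitive
    {V A : Type*} [Fintype A] (lab : V → V → Option A)
    (hdet : Deterministic lab)
    (hconn : ∀ x y : V, Relation.ReflTransGen (LabAdj lab) x y)
    (hlf : ∀ x : V, {y : V | LabAdj lab x y}.Finite)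
    (hqt : ∃ R : Finset V, ∀ x : V, ∃ γ ∈ labelAut lab, γ x ∈ R) :
    Group.FG (labelAut lab) :=
  labelAut_fg_of_quasiTransitive_general lab hdet hconn hlf hqt
end

section
/- The language L = {a bᵏ c bˡ d bᵐ : k ≥ l > m ≥ 0} over the alphabet {a, b, c, d} is not context-free. -/
/-!
If `A` derives a word of length at least `fanout ^ (#nonterminals + 1)`, repeatedly descending
into a subderivation that still yields a `1 / fanout` share of the word meets some nonterminal
`B` twice, giving `A ⇒ u B y`, `B ⇒⁺ v B x` and `B ⇒ w`; in a derivation with the fewest steps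
`v x` is nonempty, and `u vⁱ w xⁱ y` stays in the language.

For `a bⁿ⁺¹ c bⁿ⁺¹ d bⁿ`: each of `a`, `c`, `d` occurs once in every word of the language, so `v`
and `x` are runs of `b`, and the block lengths `k`, `l`, `m` of the pumped words grow linearly in
the number of copies, at rates of which at most two are nonzero. The conditions `l ≤ k` and
`m < l`, tight at one copy, force the three rates to be equal.
-/

open Symbol

namespace ContextFreeRule

variable {T N : Type*} {r : ContextFreeRule T N}

lemma Rewrites.of_append {p q v : List (Symbol T N)} (h : r.Rewrites (p ++ q) v) :
    (∃ p', r.Rewrites p p' ∧ v = p' ++ q) ∨ (∃ q', r.Rewrites q q' ∧ v = p ++ q') := by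
  induction p generalizing v with
  | nil => exact .inr ⟨v, h, rfl⟩
  | cons a p ih =>
    cases h with
    | head => exact .inl ⟨r.output ++ p, .head p, by simp⟩
    | cons _ h =>
      rcases ih h with ⟨p', hp, rfl⟩ | ⟨q', hq, rfl⟩
      · exact .inl ⟨a :: p', hp.cons a, rfl⟩
      · exact .inr ⟨q', hq, rfl⟩

lemma not_rewrites_map_terminal (z : List T) (v : List (Symbol T N)) :
    ¬ r.Rewrites (z.map terminal) v :=
  fun h => by simpa using h.nonterminal_input_mem

lemma Rewrites.eq_output_of_singleton {A : N} {v : List (Symbol T N)}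
    (h : r.Rewrites [nonterminal A] v) : r.input = A ∧ v = r.output := by
  cases h with
  | head => simp
  | cons _ h => cases h

end ContextFreeRule

namespace ContextFreeGrammar

variable {T : Type*} {g : ContextFreeGrammar T}

lemma Produces.of_append {p q v : List (Symbol T g.NT)} (h : g.Produces (p ++ q) v) :
    (∃ p', g.Produces p p' ∧ v = p' ++ q) ∨ (∃ q', g.Produces q q' ∧ v = p ++ q') := by
  obtain ⟨r, hr, h⟩ := h
  rcases h.of_append with ⟨p', hp, rfl⟩ | ⟨q', hq, rfl⟩
  · exact .inl ⟨p', ⟨r, hr, hp⟩, rfl⟩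
  · exact .inr ⟨q', ⟨r, hr, hq⟩, rfl⟩

inductive DerivesIn (g : ContextFreeGrammar T) :
    List (Symbol T g.NT) → List (Symbol T g.NT) → ℕ → Prop
  | refl (u : List (Symbol T g.NT)) : DerivesIn g u u 0
  | head {u v w : List (Symbol T g.NT)} {n : ℕ} :
      g.Produces u v → DerivesIn g v w n → DerivesIn g u w (n + 1)

namespace DerivesIn

variable {u v w : List (Symbol T g.NT)} {m n : ℕ}

lemma derives (h : g.DerivesIn u v n) : g.Derives u v := by
  induction h with
  | refl => rfl
  | head huv _ ih => exact huv.trans_derives ih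

lemma _root_.ContextFreeGrammar.Derives.exists_derivesIn (h : g.Derives u v) :
    ∃ n, g.DerivesIn u v n := by
  induction h using Relation.ReflTransGen.head_induction_on with
  | refl => exact ⟨0, .refl v⟩
  | head huv _ ih =>
    obtain ⟨n, h⟩ := ih
    exact ⟨n + 1, .head huv h⟩

lemma trans (huv : g.DerivesIn u v m) (hvw : g.DerivesIn v w n) : g.DerivesIn u w (m + n) := by
  induction huv with
  | refl => simpa using hvw
  | head huv _ ih => simpa [Nat.add_right_comm] using (ih hvw).head huv

lemma append_left (h : g.DerivesIn u v n) (p : List (Symbol T g.NT)) :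
    g.DerivesIn (p ++ u) (p ++ v) n := by
  induction h with
  | refl => exact .refl _
  | head huv _ ih => exact .head (huv.append_left p) ih

lemma append_right (h : g.DerivesIn u v n) (p : List (Symbol T g.NT)) :
    g.DerivesIn (u ++ p) (v ++ p) n := by
  induction h with
  | refl => exact .refl _
  | head huv _ ih => exact .head (huv.append_right p) ih

lemma trans_nonterminal {p s : List (Symbol T g.NT)} {B : g.NT}
    (h : g.DerivesIn u (p ++ [nonterminal B] ++ s) m) (hB : g.DerivesIn [nonterminal B] v n) :
    g.DerivesIn u (p ++ v ++ s) (m + n) :=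
  h.trans ((hB.append_left p).append_right s)

lemma of_append {p q : List (Symbol T g.NT)} (h : g.DerivesIn (p ++ q) w n) :
    ∃ w₁ w₂ n₁ n₂, w = w₁ ++ w₂ ∧ n₁ + n₂ = n ∧
      g.DerivesIn p w₁ n₁ ∧ g.DerivesIn q w₂ n₂ := by
  generalize hpq : p ++ q = u at h
  induction h generalizing p q with
  | refl => exact ⟨p, q, 0, 0, hpq.symm, rfl, .refl p, .refl q⟩
  | head huv _ ih =>
    subst hpq
    rcases huv.of_append with ⟨p', hp, rfl⟩ | ⟨q', hq, rfl⟩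
    · obtain ⟨w₁, w₂, n₁, n₂, rfl, rfl, h₁, h₂⟩ := ih rfl
      exact ⟨w₁, w₂, n₁ + 1, n₂, rfl, by omega, .head hp h₁, h₂⟩
    · obtain ⟨w₁, w₂, n₁, n₂, rfl, rfl, h₁, h₂⟩ := ih rfl
      exact ⟨w₁, w₂, n₁, n₂ + 1, rfl, by omega, h₁, .head hq h₂⟩

lemma eq_of_map_terminal {z : List T} (h : g.DerivesIn (z.map terminal) v n) :
    v = z.map terminal := by
  cases h with
  | refl => rfl
  | head huv _ =>
    obtain ⟨r, -, hr⟩ := huv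
    exact absurd hr (ContextFreeRule.not_rewrites_map_terminal z _)

lemma exists_rule_of_nonterminal {A : g.NT} {z : List T}
    (h : g.DerivesIn [nonterminal A] (z.map terminal) n) :
    ∃ r ∈ g.rules, r.input = A ∧ ∃ n', n = n' + 1 ∧ g.DerivesIn r.output (z.map terminal) n' := by
  generalize hw : z.map terminal = w at h
  obtain _ | ⟨huv, h⟩ := h
  · cases z <;> simp at hw
  · subst hw
    obtain ⟨r, hr, hrw⟩ := huv
    obtain ⟨rfl, rfl⟩ := hrw.eq_output_of_singleton
    exact ⟨r, hr, rfl, _, rfl, h⟩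

lemma exists_long_nonterminal {l : List (Symbol T g.NT)} {z : List T} {K : ℕ} (hK : 2 ≤ K)
    (h : g.DerivesIn l (z.map terminal) n) (hz : l.length * (K - 1) < z.length) :
    ∃ (B : g.NT) (u w y : List T) (n₁ n₂ : ℕ), z = u ++ w ++ y ∧ n₁ + n₂ ≤ n ∧
      g.DerivesIn l (u.map terminal ++ [nonterminal B] ++ y.map terminal) n₁ ∧
      g.DerivesIn [nonterminal B] (w.map terminal) n₂ ∧ K ≤ w.length := by
  induction l generalizing z n with
  | nil =>
    have := congrArg List.length (DerivesIn.eq_of_map_terminal (z := []) h)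
    simp_all
  | cons s l ih =>
    obtain ⟨w₁, w₂, n₁, n₂, hw, rfl, h₁, h₂⟩ := DerivesIn.of_append (p := [s]) h
    obtain ⟨z₁, z₂, rfl, rfl, rfl⟩ := List.map_eq_append_iff.mp hw
    by_cases hz₁ : K ≤ z₁.length
    · cases s with
      | terminal t =>
        have := congrArg List.length (DerivesIn.eq_of_map_terminal (z := [t]) h₁)
        simp at this
        omega
      | nonterminal B =>
        exact ⟨B, [], z₁, z₂, n₂, n₁, by simp, by omega,
          by simpa using h₂.append_left [nonterminal B], h₁, hz₁⟩
    · obtain ⟨B, u, w, y, m₁, m₂, rfl, hm, hctx, hB, hw⟩ :=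
        ih h₂ (by simp only [List.length_cons, List.length_append, Nat.succ_mul] at hz; omega)
      refine ⟨B, z₁ ++ u, w, y, n₁ + m₁, m₂, by simp, by omega, ?_, hB, hw⟩
      simpa using (h₁.append_right l).trans (hctx.append_left (z₁.map terminal))

end DerivesIn

def inputs (g : ContextFreeGrammar T) [DecidableEq g.NT] : Finset g.NT :=
  g.rules.image ContextFreeRule.input

-- At least `2`, so that a single terminal is never a long piece in `exists_long_nonterminal`.
def fanout (g : ContextFreeGrammar T) : ℕ :=
  max 2 (g.rules.sup fun r ↦ r.output.length)

lemma two_le_fanout : 2 ≤ g.fanout := le_max_left _ _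

lemma length_output_le_fanout {r : ContextFreeRule T g.NT} (hr : r ∈ g.rules) :
    r.output.length ≤ g.fanout :=
  (Finset.le_sup (f := fun r : ContextFreeRule T g.NT ↦ r.output.length) hr).trans
    (le_max_right _ _)

lemma input_mem_inputs [DecidableEq g.NT] {r : ContextFreeRule T g.NT} (hr : r ∈ g.rules) :
    r.input ∈ g.inputs :=
  Finset.mem_image_of_mem _ hr

def PumpingSplit (g : ContextFreeGrammar T) (A : g.NT) (z : List T) (n : ℕ) : Prop :=
  ∃ (B : g.NT) (u v w x y : List T) (n₁ n₂ n₃ : ℕ), z = u ++ v ++ w ++ x ++ y ∧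
    g.DerivesIn [nonterminal A] (u.map terminal ++ [nonterminal B] ++ y.map terminal) n₁ ∧
    g.DerivesIn [nonterminal B] (v.map terminal ++ [nonterminal B] ++ x.map terminal) n₂ ∧
    g.DerivesIn [nonterminal B] (w.map terminal) n₃ ∧ 0 < n₂ ∧ n₁ + n₂ + n₃ ≤ n

def DerivesThrough (g : ContextFreeGrammar T) (F : Finset g.NT) (A : g.NT) (z : List T)
    (n : ℕ) : Prop :=
  ∃ B ∈ F, ∃ (u w y : List T) (n₁ n₂ : ℕ), z = u ++ w ++ y ∧
    g.DerivesIn [nonterminal A] (u.map terminal ++ [nonterminal B] ++ y.map terminal) n₁ ∧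
    g.DerivesIn [nonterminal B] (w.map terminal) n₂ ∧ n₁ + n₂ ≤ n

section Lift

variable {A B : g.NT} {u y z : List T} {m n N : ℕ}

lemma PumpingSplit.lift
    (hA : g.DerivesIn [nonterminal A] (u.map terminal ++ [nonterminal B] ++ y.map terminal) m)
    (hB : g.PumpingSplit B z n) (hN : m + n ≤ N) : g.PumpingSplit A (u ++ z ++ y) N := by
  obtain ⟨C, u', v, w, x, y', n₁, n₂, n₃, rfl, hC, hv, hw, hn₂, hn⟩ := hB
  exact ⟨C, u ++ u', v, w, x, y' ++ y, m + n₁, n₂, n₃, by simp, by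
    simpa using hA.trans_nonterminal hC, hv, hw, hn₂, by omega⟩

lemma DerivesThrough.lift {F : Finset g.NT}
    (hA : g.DerivesIn [nonterminal A] (u.map terminal ++ [nonterminal B] ++ y.map terminal) m)
    (hB : g.DerivesThrough F B z n) (hN : m + n ≤ N) :
    g.DerivesThrough F A (u ++ z ++ y) N := by
  obtain ⟨C, hC, u', w, y', n₁, n₂, rfl, hBC, hw, hn⟩ := hB
  exact ⟨C, hC, u ++ u', w, y' ++ y, m + n₁, n₂, by simp, by
    simpa using hA.trans_nonterminal hBC, hw, by omega⟩

lemma DerivesThrough.pumpingSplit_of_self (hm : 0 < m)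
    (hA : g.DerivesIn [nonterminal A] (u.map terminal ++ [nonterminal B] ++ y.map terminal) m)
    (hB : g.DerivesThrough {A} B z n) (hN : m + n ≤ N) :
    g.PumpingSplit A (u ++ z ++ y) N := by
  obtain ⟨C, hC, u', w, y', n₁, n₂, rfl, hBC, hw, hn⟩ := hB
  obtain rfl := Finset.mem_singleton.mp hC
  exact ⟨C, [], u ++ u', w, y' ++ y, [], 0, m + n₁, n₂, by simp, by simpa using .refl _, by
    simpa using hA.trans_nonterminal hBC, hw, by omega, by omega⟩

end Lift

lemma DerivesThrough.of_insert [DecidableEq g.NT] {F : Finset g.NT} {A B : g.NT} {z : List T}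
    {n : ℕ} (h : g.DerivesThrough (insert A F) B z n) :
    g.DerivesThrough {A} B z n ∨ g.DerivesThrough F B z n := by
  obtain ⟨C, hC, rest⟩ := h
  rcases Finset.mem_insert.mp hC with rfl | hC
  · exact .inl ⟨C, Finset.mem_singleton_self C, rest⟩
  · exact .inr ⟨C, hC, rest⟩

/- `F` collects the nonterminals met so far on the path from the root: each descent into a long
subword costs one factor `fanout` and removes one nonterminal from `g.inputs \ F`. -/
lemma pumpingSplit_or_derivesThrough [DecidableEq g.NT] {A : g.NT} {z : List T} {n : ℕ}
    (F : Finset g.NT)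
    (h : g.DerivesIn [nonterminal A] (z.map terminal) n)
    (hz : g.fanout ^ ((g.inputs \ F).card + 1) ≤ z.length) :
    g.PumpingSplit A z n ∨ g.DerivesThrough F A z n := by
  induction n using Nat.strong_induction_on generalizing A z F with
  | _ n ih =>
  by_cases hAF : A ∈ F
  · exact .inr ⟨A, hAF, [], z, [], 0, n, by simp, by simpa using .refl _, h, by omega⟩
  obtain ⟨r, hr, rfl, n, rfl, hout⟩ := h.exists_rule_of_nonterminal
  set M := g.fanout
  set K := M ^ ((g.inputs \ insert r.input F).card + 1)
  have hK : M * K ≤ z.length := by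
    rwa [← Finset.card_erase_add_one (Finset.mem_sdiff.mpr ⟨input_mem_inputs hr, hAF⟩),
      ← Finset.sdiff_insert, pow_succ'] at hz
  have hM := two_le_fanout (g := g)
  have hK2 : 2 ≤ K := hM.trans (Nat.le_self_pow (Nat.succ_ne_zero _) _)
  have hlong : r.output.length * (K - 1) < z.length :=
    calc r.output.length * (K - 1) ≤ M * (K - 1) :=
          Nat.mul_le_mul_right _ (length_output_le_fanout hr)
      _ < M * K := Nat.mul_lt_mul_of_pos_left (by omega) (by omega)
      _ ≤ z.length := hK
  obtain ⟨B, u, w, y, n₁, n₂, rfl, hn, hctx, hB, hw⟩ := hout.exists_long_nonterminal hK2 hlong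
  have hA : g.DerivesIn [nonterminal r.input]
      (u.map terminal ++ [nonterminal B] ++ y.map terminal) (n₁ + 1) :=
    .head ⟨r, hr, ContextFreeRule.Rewrites.input_output⟩ hctx
  rcases ih n₂ (by omega) (insert r.input F) hB hw with hp | hthrough
  · exact .inl (hp.lift hA (by omega))
  · rcases hthrough.of_insert with hself | hF
    · exact .inl (hself.pumpingSplit_of_self n₁.succ_pos hA (by omega))
    · exact .inr (hF.lift hA (by omega))

lemma Derives.pump {B : g.NT} {v x : List (Symbol T g.NT)}
    (h : g.Derives [nonterminal B] (v ++ [nonterminal B] ++ x)) (i : ℕ) :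
    g.Derives [nonterminal B]
      ((List.replicate i v).flatten ++ [nonterminal B] ++ (List.replicate i x).flatten) := by
  induction i with
  | zero => exact .refl _
  | succ i ih =>
    rw [List.replicate_succ, List.replicate_succ' (a := x)]
    simpa using h.trans ((ih.append_left v).append_right x)

lemma PumpingSplit.exists_pumping {A : g.NT} {z : List T} {n : ℕ} (h : g.PumpingSplit A z n)
    (hmin : ∀ m < n, ¬ g.DerivesIn [nonterminal A] (z.map terminal) m) :
    ∃ u v w x y : List T, z = u ++ v ++ w ++ x ++ y ∧ v ++ x ≠ [] ∧ ∀ i,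
      g.Derives [nonterminal A] ((u ++ (List.replicate i v).flatten ++ w ++
        (List.replicate i x).flatten ++ y).map terminal) := by
  obtain ⟨B, u, v, w, x, y, n₁, n₂, n₃, rfl, hA, hB, hw, hn₂, hn⟩ := h
  refine ⟨u, v, w, x, y, rfl, fun hvx ↦ ?_, fun i ↦ ?_⟩
  · obtain ⟨rfl, rfl⟩ := List.append_eq_nil_iff.mp hvx
    -- cutting out the loop `B ⇒⁺ B` would give a shorter derivation
    exact hmin (n₁ + n₃) (by omega) (by simpa using hA.trans_nonterminal hw)
  · have hBw := (hB.derives.pump i).trans ((hw.derives.append_left _).append_right _)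
    simpa using hA.derives.trans ((hBw.append_left _).append_right _)

end ContextFreeGrammar

open ContextFreeGrammar in
theorem Language.IsContextFree.exists_pumping {T : Type*} {L : Language T}
    (hL : L.IsContextFree) :
    ∃ p, ∀ z ∈ L, p ≤ z.length → ∃ u v w x y : List T, z = u ++ v ++ w ++ x ++ y ∧
      v ++ x ≠ [] ∧
        ∀ i, u ++ (List.replicate i v).flatten ++ w ++ (List.replicate i x).flatten ++ y ∈ L := by
  classical
  obtain ⟨g, rfl⟩ := hL
  refine ⟨g.fanout ^ (g.inputs.card + 1), fun z hz hlen ↦ ?_⟩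
  have hex : ∃ n, g.DerivesIn [nonterminal g.initial] (z.map terminal) n :=
    hz.exists_derivesIn
  obtain hp | ⟨_, hB, -⟩ :=
    pumpingSplit_or_derivesThrough ∅ (Nat.find_spec hex) (by simpa using hlen)
  · exact hp.exists_pumping fun m hm ↦ Nat.find_min hex hm
  · simp at hB

section CountBefore

variable {α : Type*} [DecidableEq α]

def countBefore (c b : α) (l : List α) : ℕ := (l.takeWhile (· != c)).count b

variable {c b : α}

lemma countBefore_append_of_mem {l₁ : List α} (h : c ∈ l₁) (l₂ : List α) :
    countBefore c b (l₁ ++ l₂) = countBefore c b l₁ := by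
  induction l₁ with
  | nil => simp at h
  | cons a l₁ ih =>
    by_cases ha : a = c
    · simp [countBefore, ha]
    · have := ih (by simpa [Ne.symm ha] using h)
      simp_all [countBefore, List.count_cons]

lemma countBefore_append_of_notMem {l₁ : List α} (h : c ∉ l₁) (l₂ : List α) :
    countBefore c b (l₁ ++ l₂) = l₁.count b + countBefore c b l₂ := by
  rw [countBefore, List.takeWhile_append_of_pos (by grind), List.count_append, countBefore]

lemma exists_countBefore_pump (hc : c ≠ b) (u w y : List α) (p q : ℕ) :
    ∃ K s, (s = 0 ∨ s = p ∨ s = p + q) ∧ ∀ i : ℕ, countBefore c b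
      (u ++ List.replicate (i * p) b ++ w ++ List.replicate (i * q) b ++ y) = K + i * s := by
  have hrep (n : ℕ) : c ∉ List.replicate n b := by simp [hc]
  simp only [List.append_assoc]
  by_cases hu : c ∈ u
  · exact ⟨countBefore c b u, 0, .inl rfl, fun i ↦ by simp [countBefore_append_of_mem hu]⟩
  by_cases hw : c ∈ w
  · refine ⟨u.count b + countBefore c b w, p, .inr (.inl rfl), fun i ↦ ?_⟩
    simp [countBefore_append_of_notMem hu, countBefore_append_of_notMem (hrep _),
      countBefore_append_of_mem hw]
    ring
  · refine ⟨u.count b + w.count b + countBefore c b y, p + q, .inr (.inr rfl), fun i ↦ ?_⟩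
    simp [countBefore_append_of_notMem hu, countBefore_append_of_notMem (hrep _),
      countBefore_append_of_notMem hw]
    ring

lemma exists_countBefore_reverse_pump (hc : c ≠ b) (u w y : List α) (p q : ℕ) :
    ∃ K s, (s = 0 ∨ s = q ∨ s = p + q) ∧ ∀ i : ℕ, countBefore c b
      (u ++ List.replicate (i * p) b ++ w ++ List.replicate (i * q) b ++ y).reverse =
        K + i * s := by
  obtain ⟨K, s, hs, hK⟩ := exists_countBefore_pump hc y.reverse w.reverse u.reverse q p
  exact ⟨K, s, by omega, fun i ↦ by simpa [List.append_assoc] using hK i⟩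

end CountBefore

lemma notMem_of_count_pump_eq {α : Type*} [DecidableEq α] {c : α} {u v w x y : List α}
    (h : (u ++ w ++ y).count c = (u ++ v ++ w ++ x ++ y).count c) : c ∉ v ∧ c ∉ x := by
  simp only [List.count_append] at h
  simp only [← List.count_eq_zero]
  omega

def abcdWord (k l m : ℕ) : List (Fin 4) :=
  [0] ++ List.replicate k 1 ++ [2] ++ List.replicate l 1 ++ [3] ++ List.replicate m 1

def abcdLanguage : Language (Fin 4) :=
  {z | ∃ k l m : ℕ, l ≤ k ∧ m < l ∧ z = abcdWord k l m}

section AbcdWord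

variable (k l m : ℕ)

lemma length_abcdWord : (abcdWord k l m).length = k + l + m + 3 := by
  simp [abcdWord]
  omega

lemma count_abcdWord_of_ne_one {c : Fin 4} (hc : c ≠ 1) : (abcdWord k l m).count c = 1 := by
  fin_cases c <;> simp_all [abcdWord, List.count_replicate]

lemma count_one_abcdWord : (abcdWord k l m).count 1 = k + l + m := by
  simp [abcdWord]
  omega

lemma countBefore_abcdWord : countBefore 2 1 (abcdWord k l m) = k := by
  simp [abcdWord, countBefore]

lemma countBefore_reverse_abcdWord : countBefore 3 1 (abcdWord k l m).reverse = m := by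
  simp [abcdWord, countBefore]

end AbcdWord

lemma exists_replicate_of_pump_mem_abcdLanguage {u v w x y : List (Fin 4)}
    (h : ∀ i, u ++ (List.replicate i v).flatten ++ w ++ (List.replicate i x).flatten ++ y ∈
      abcdLanguage) :
    (∃ p, v = List.replicate p 1) ∧ ∃ q, x = List.replicate q 1 := by
  have hmarker (c : Fin 4) (hc : c ≠ 1) : c ∉ v ∧ c ∉ x := by
    obtain ⟨k₀, l₀, m₀, -, -, h₀⟩ := h 0
    obtain ⟨k₁, l₁, m₁, -, -, h₁⟩ := h 1
    simp only [List.replicate_zero, List.flatten_nil, List.append_nil, List.replicate_one,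
      List.flatten_singleton] at h₀ h₁
    refine notMem_of_count_pump_eq (u := u) (w := w) (y := y) ?_
    rw [h₀, h₁, count_abcdWord_of_ne_one _ _ _ hc, count_abcdWord_of_ne_one _ _ _ hc]
  exact ⟨⟨_, List.eq_replicate_iff.mpr ⟨rfl, fun a ha ↦ not_not.mp fun hne ↦ (hmarker a hne).1 ha⟩⟩,
    ⟨_, List.eq_replicate_iff.mpr ⟨rfl, fun a ha ↦ not_not.mp fun hne ↦ (hmarker a hne).2 ha⟩⟩⟩

lemma exists_middle_block_of_mem_abcdLanguage {z : List (Fin 4)} (hz : z ∈ abcdLanguage) :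
    ∃ l, countBefore 3 1 z.reverse < l ∧ l ≤ countBefore 2 1 z ∧
      countBefore 2 1 z + l + countBefore 3 1 z.reverse = z.count 1 := by
  obtain ⟨k, l, m, hlk, hml, rfl⟩ := hz
  refine ⟨l, ?_⟩
  rw [countBefore_reverse_abcdWord, countBefore_abcdWord, count_one_abcdWord]
  exact ⟨hml, hlk, rfl⟩

/-- the language `{a bᵏ c bˡ d bᵐ : k ≥ l > m ≥ 0}` over a four letter
alphabet (`0 = a`, `1 = b`, `2 = c`, `3 = d`) is not context-free. -/
theorem abcd_language_not_context_free :
    ¬ Language.IsContextFree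
      {z : List (Fin 4) | ∃ k l m : ℕ, l ≤ k ∧ m < l ∧
        z = [0] ++ List.replicate k 1 ++ [2] ++ List.replicate l 1 ++ [3] ++
          List.replicate m 1} := by
  intro hL
  obtain ⟨n, hn⟩ := hL.exists_pumping
  obtain ⟨u, v, w, x, y, hz, hvx, hpump⟩ := hn (abcdWord (n + 1) (n + 1) n)
    ⟨_, _, _, le_rfl, n.lt_succ_self, rfl⟩ (by rw [length_abcdWord]; omega)
  obtain ⟨⟨p, rfl⟩, ⟨q, rfl⟩⟩ := exists_replicate_of_pump_mem_abcdLanguage hpump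
  simp only [List.flatten_replicate_replicate] at hpump
  obtain ⟨K, s, hs, hk⟩ := exists_countBefore_pump (by decide : (2 : Fin 4) ≠ 1) u w y p q
  obtain ⟨M, t, ht, hm⟩ :=
    exists_countBefore_reverse_pump (by decide : (3 : Fin 4) ≠ 1) u w y p q
  have hblocks (i : ℕ) : ∃ l, M + i * t < l ∧ l ≤ K + i * s ∧
      K + i * s + l + (M + i * t) = (u ++ w ++ y).count 1 + i * p + i * q := by
    obtain ⟨l, hml, hlk, hsum⟩ := exists_middle_block_of_mem_abcdLanguage (hpump i)
    simp only [hk, hm, List.count_append, List.count_replicate_self] at hml hlk hsum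
    exact ⟨l, hml, hlk, by rw [List.count_append, List.count_append]; omega⟩
  have hk₁ := hk 1
  have hm₁ := hm 1
  simp only [one_mul, ← hz, countBefore_abcdWord, countBefore_reverse_abcdWord] at hk₁ hm₁
  simp at hvx
  obtain ⟨l₀, h₀⟩ := hblocks 0
  obtain ⟨l₂, h₂⟩ := hblocks 2
  -- `k` and `m` grow at rates `s` and `t`, `l` at rate `p + q - s - t`; the bounds at `0` and `2`
  -- copies force `s = t = p + q - s - t`, which no admissible pair of rates satisfies
  rcases hs with rfl | rfl | rfl <;> rcases ht with rfl | rfl | rfl <;> omega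
end

section
/- Let X be a connected, locally finite graph and Γ ≤ AUT(X) act quasi-transitively on X. Then for any block B of X, the setwise stabilizer Γ_B = {γ ∈ Γ : γB = B} acts quasi-transitively on B (with finitely many edge orbits, hence finitely many vertex orbits). -/
/-- The induced subgraph on `B` has no cutvertex. -/
def NoCutVertex {V : Type*} (G : SimpleGraph V) (B : Set V) : Prop :=
  ∀ v ∈ B, (G.induce (B \ {v})).Preconnected

/-- `B` is a block of `G`: a maximal connected induced subgraph without a cutvertex. -/
def IsBlock {V : Type*} (G : SimpleGraph V) (B : Set V) : Prop :=
  (G.induce B).Connected ∧ NoCutVertex G B ∧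
    ∀ B' : Set V, B ⊆ B' → (G.induce B').Connected → NoCutVertex G B' → B' = B

/-!
An automorphism maps blocks to blocks, and two blocks sharing an edge coincide (their union is
still connected without a cutvertex, so maximality forces equality). Hence any element of `Γ`
carrying an edge of `B` onto an edge of `B` stabilizes `B`. Every edge of the graph can be moved
by `Γ` into the finite set of edges starting in a finite set of orbit representatives (local
finiteness), so choosing one edge of `B` in each of these finitely many orbits that meet `B`
gives finitely many edge orbits of the stabilizer. Vertices are handled through incident edges,
except when `B` is a single vertex.
-/

open SimpleGraph

theorem MulAction.exists_finite_subset_forall_exists_smul_mem {Γ α : Type*}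
    [Group Γ] [MulAction Γ α] {S F : Set α} (hF : F.Finite)
    (hSF : ∀ a ∈ S, ∃ g : Γ, g • a ∈ F) :
    ∃ S₀ ⊆ S, S₀.Finite ∧ ∀ a ∈ S, ∃ g : Γ, g • a ∈ S₀ := by
  set F' := {b ∈ F | ∃ a ∈ S, ∃ g : Γ, g • a = b}
  have : Finite F' := (hF.subset (Set.sep_subset _ _)).to_subtype
  choose rep hrepS g hg using fun b : F' => b.2.2
  refine ⟨Set.range rep, Set.range_subset_iff.2 hrepS, Set.finite_range rep, fun a ha => ?_⟩
  obtain ⟨h, hh⟩ := hSF a ha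
  let b : F' := ⟨h • a, hh, a, ha, h, rfl⟩
  refine ⟨(g b)⁻¹ * h, b, ?_⟩
  rw [mul_smul, eq_inv_smul_iff, hg b]

namespace SimpleGraph

variable {V W : Type*} {G : SimpleGraph V} {G' : SimpleGraph W}

theorem finite_setOf_adj_of_fst_mem [G.LocallyFinite] {R : Set V} (hR : R.Finite) :
    {p : V × V | p.1 ∈ R ∧ G.Adj p.1 p.2}.Finite := by
  refine (hR.biUnion fun r _ => (G.neighborSet r).toFinite.image (Prod.mk r)).subset ?_
  rintro ⟨x, y⟩ ⟨hx, hxy⟩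
  exact Set.mem_biUnion hx ⟨y, hxy, rfl⟩

theorem Preconnected.exists_adj_mem_of_nontrivial {s : Set V} (hs : (G.induce s).Preconnected)
    (hnt : s.Nontrivial) {x : V} (hx : x ∈ s) : ∃ y ∈ s, G.Adj x y := by
  have := hnt.coe_sort
  obtain ⟨y, hxy⟩ := hs.exists_adj_of_nontrivial ⟨x, hx⟩
  exact ⟨y, y.2, hxy⟩

def Iso.ofPerm (γ : Equiv.Perm V) (hγ : ∀ x y, G.Adj (γ x) (γ y) ↔ G.Adj x y) : G ≃g G :=
  ⟨γ, hγ _ _⟩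

def Iso.induceImage (φ : G ≃g G') (s : Set V) : G.induce s ≃g G'.induce (φ '' s) :=
  φ.induce φ.injective.injOn.bijOn_image

theorem Iso.preconnected_induce_image_iff (φ : G ≃g G') {s : Set V} :
    (G'.induce (φ '' s)).Preconnected ↔ (G.induce s).Preconnected :=
  (φ.induceImage s).preconnected_iff.symm

theorem Iso.connected_induce_image_iff (φ : G ≃g G') {s : Set V} :
    (G'.induce (φ '' s)).Connected ↔ (G.induce s).Connected :=
  (φ.induceImage s).connected_iff.symm

end SimpleGraph

section Blocks

variable {V W : Type*} {G : SimpleGraph V} {G' : SimpleGraph W} {s t : Set V}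

theorem NoCutVertex.image (φ : G ≃g G') (hs : NoCutVertex G s) : NoCutVertex G' (φ '' s) := by
  rintro _ ⟨v, hv, rfl⟩
  rw [← Set.image_singleton, ← Set.image_sdiff φ.injective, φ.preconnected_induce_image_iff]
  exact hs v hv

theorem IsBlock.image (φ : G ≃g G') (hs : IsBlock G s) : IsBlock G' (φ '' s) := by
  obtain ⟨hconn, hcut, hmax⟩ := hs
  refine ⟨φ.connected_induce_image_iff.2 hconn, hcut.image φ, fun B' hsB' hconn' hcut' => ?_⟩
  have hB' : φ '' (φ.symm '' B') = B' := by simp [Set.image_image]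
  have hpre : φ.symm '' B' = s := by
    refine hmax _ ?_ (φ.symm.connected_induce_image_iff.2 hconn') (hcut'.image φ.symm)
    rw [← Set.image_subset_image_iff φ.injective, hB']
    exact hsB'
  rw [← hB', hpre]

theorem IsBlock.preconnected_induce_diff (hs : IsBlock G s) (v : V) :
    (G.induce (s \ {v})).Preconnected := by
  by_cases hv : v ∈ s
  · exact hs.2.1 v hv
  · rw [Set.sdiff_singleton_eq_self hv]
    exact hs.1.preconnected

theorem IsBlock.eq_of_adj (hs : IsBlock G s) (ht : IsBlock G t) {x y : V} (hxs : x ∈ s)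
    (hys : y ∈ s) (hxt : x ∈ t) (hyt : y ∈ t) (hxy : G.Adj x y) : s = t := by
  have hconn : (G.induce (s ∪ t)).Connected :=
    induce_union_connected hs.1.preconnected ht.1.preconnected ⟨x, hxs, hxt⟩
  have hcut : NoCutVertex G (s ∪ t) := by
    intro v _
    -- an edge has an endpoint other than `v`, and it lies in both blocks
    have hcommon : ((s \ {v}) ∩ (t \ {v})).Nonempty := by
      by_cases hxv : x = v
      · have hyv : y ≠ v := fun h => hxy.ne (hxv.trans h.symm)
        exact ⟨y, ⟨hys, hyv⟩, hyt, hyv⟩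
      · exact ⟨x, ⟨hxs, hxv⟩, hxt, hxv⟩
    rw [Set.union_sdiff_distrib]
    exact (induce_union_connected (hs.preconnected_induce_diff v)
      (ht.preconnected_induce_diff v) hcommon).preconnected
  exact (hs.2.2 _ Set.subset_union_left hconn hcut).symm.trans
    (ht.2.2 _ Set.subset_union_right hconn hcut)

theorem IsBlock.image_eq_self_of_adj (hs : IsBlock G s) (φ : G ≃g G) {x y : V} (hx : x ∈ s)
    (hy : y ∈ s) (hxy : G.Adj x y) (hφx : φ x ∈ s) (hφy : φ y ∈ s) : φ '' s = s :=
  (hs.image φ).eq_of_adj hs (Set.mem_image_of_mem φ hx) (Set.mem_image_of_mem φ hy) hφx hφy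
    (φ.map_adj_iff.2 hxy)

end Blocks

theorem block_stabilizer_quasiTransitive_general
    {V : Type*} (G : SimpleGraph V) [G.LocallyFinite]
    (Γ : Subgroup (Equiv.Perm V))
    (hΓ : ∀ γ ∈ Γ, ∀ x y : V, G.Adj (γ x) (γ y) ↔ G.Adj x y)
    (hqt : ∃ R : Finset V, ∀ x : V, ∃ γ ∈ Γ, γ x ∈ R)
    (B : Set V) (hB : IsBlock G B) :
    (∃ E₀ : Finset (V × V), ∀ x y : V, x ∈ B → y ∈ B → G.Adj x y →
        ∃ γ ∈ Γ, γ '' B = B ∧ (γ x, γ y) ∈ E₀) ∧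
    (∃ R₀ : Finset V, ∀ x ∈ B, ∃ γ ∈ Γ, γ '' B = B ∧ γ x ∈ R₀) := by
  obtain ⟨R, hR⟩ := hqt
  obtain ⟨S₀, hS₀B, hS₀fin, hS₀⟩ :=
    MulAction.exists_finite_subset_forall_exists_smul_mem (Γ := Γ)
      (S := {p : V × V | p.1 ∈ B ∧ p.2 ∈ B ∧ G.Adj p.1 p.2})
      (finite_setOf_adj_of_fst_mem (G := G) R.finite_toSet) <| by
        rintro ⟨x, y⟩ ⟨-, -, hxy⟩
        obtain ⟨γ, hγ, hγx⟩ := hR x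
        exact ⟨⟨γ, hγ⟩, hγx, (hΓ γ hγ x y).2 hxy⟩
  have hedge : ∀ x y : V, x ∈ B → y ∈ B → G.Adj x y →
      ∃ γ ∈ Γ, γ '' B = B ∧ (γ x, γ y) ∈ hS₀fin.toFinset := by
    intro x y hx hy hxy
    obtain ⟨⟨γ, hγ⟩, hmem⟩ := hS₀ (x, y) ⟨hx, hy, hxy⟩
    obtain ⟨hγx, hγy, -⟩ := hS₀B hmem
    exact ⟨γ, hγ, hB.image_eq_self_of_adj (Iso.ofPerm γ (hΓ γ hγ)) hx hy hxy hγx hγy,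
      hS₀fin.mem_toFinset.2 hmem⟩
  refine ⟨⟨_, hedge⟩, ?_⟩
  by_cases hnt : B.Nontrivial
  · classical
    refine ⟨hS₀fin.toFinset.image Prod.fst, fun x hx => ?_⟩
    obtain ⟨y, hy, hxy⟩ := hB.1.preconnected.exists_adj_mem_of_nontrivial hnt hx
    obtain ⟨γ, hγ, hγB, hmem⟩ := hedge x y hx hy hxy
    exact ⟨γ, hγ, hγB, Finset.mem_image_of_mem _ hmem⟩
  · have hfin := (Set.not_nontrivial_iff.1 hnt).finite
    exact ⟨hfin.toFinset, fun x hx =>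
      ⟨1, one_mem Γ, Set.image_id B, hfin.mem_toFinset.2 hx⟩⟩

/-- if `Γ` acts quasi-transitively on a connected, locally finite graph
`G`, then for any block `B` the setwise stabilizer of `B` in `Γ` acts with finitely
many orbits on the edges of `B`, and with finitely many orbits on the vertices of
`B`. -/
theorem block_stabilizer_quasiTransitive
    {V : Type*} (G : SimpleGraph V) [G.LocallyFinite] (hconn : G.Connected)
    (Γ : Subgroup (Equiv.Perm V))
    (hΓ : ∀ γ ∈ Γ, ∀ x y : V, G.Adj (γ x) (γ y) ↔ G.Adj x y)
    (hqt : ∃ R : Finset V, ∀ x : V, ∃ γ ∈ Γ, γ x ∈ R)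
    (B : Set V) (hB : IsBlock G B) :
    (∃ E₀ : Finset (V × V), ∀ x y : V, x ∈ B → y ∈ B → G.Adj x y →
        ∃ γ ∈ Γ, γ '' B = B ∧ (γ x, γ y) ∈ E₀) ∧
    (∃ R₀ : Finset V, ∀ x ∈ B, ∃ γ ∈ Γ, γ '' B = B ∧ γ x ∈ R₀) :=
  block_stabilizer_quasiTransitive_general G Γ hΓ hqt B hB
end
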